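/- Let A be a real n×n matrix, B a real n×m matrix, T > 0, and let f : ℝ → ℝ^m be twice continuously differentiable with first derivative v and ‖v′(t)‖ ≤ W for all t. For each nonnegative integer k let d′[k] = ∫₀^T e^{Aτ} B (∫_{kT}^{(k+1)T−τ} v(β) dβ) dτ. Then d′[k] = (∫₀^T e^{Aτ} B (T−τ) dτ) v(kT) + R[k], where the remainder satisfies ‖R[k]‖ ≤ (T² W / 2) ∫₀^T ‖e^{Aτ} B‖ dτ. -/

import Mathlib

open scoped Matrix.Norms.L2Operator
open MeasureTheory NormedSpace Matrix

/-- The unmatched part of the sampled-data disturbance: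
`d′[k] = ∫₀ᵀ e^{Aτ} B (∫_{kT}^{(k+1)T−τ} v(β) dβ) dτ`. -/
noncomputable def dPrime {n m : ℕ} (A : Matrix (Fin n) (Fin n) ℝ)
    (B : Matrix (Fin n) (Fin m) ℝ) (v : ℝ → EuclideanSpace ℝ (Fin m))
    (T : ℝ) (k : ℕ) : EuclideanSpace ℝ (Fin n) :=
  ∫ τ in (0:ℝ)..T,
    Matrix.toEuclideanLin (NormedSpace.exp (τ • A) * B)
      (∫ β in ((k : ℝ) * T)..(((k : ℝ) + 1) * T - τ), v β)

noncomputable def toECLM {n m : ℕ} :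
    Matrix (Fin n) (Fin m) ℝ →L[ℝ]
      (EuclideanSpace ℝ (Fin m) →L[ℝ] EuclideanSpace ℝ (Fin n)) :=
  LinearMap.toContinuousLinearMap
    (((Matrix.toEuclideanLin (𝕜 := ℝ) (m := Fin n) (n := Fin m)).trans
        LinearMap.toContinuousLinearMap).toLinearMap)

lemma toECLM_apply {n m : ℕ} (M : Matrix (Fin n) (Fin m) ℝ) (x : EuclideanSpace ℝ (Fin m)) :
    toECLM M x = Matrix.toEuclideanLin M x := by
  simp [toECLM]

lemma norm_toECLM {n m : ℕ} (M : Matrix (Fin n) (Fin m) ℝ) : ‖toECLM M‖ = ‖M‖ := by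
  rw [Matrix.l2_opNorm_def]; congr 1

lemma norm_toEuclideanLin_apply_le {n m : ℕ} (M : Matrix (Fin n) (Fin m) ℝ)
    (x : EuclideanSpace ℝ (Fin m)) : ‖Matrix.toEuclideanLin M x‖ ≤ ‖M‖ * ‖x‖ := by
  rw [← toECLM_apply, ← norm_toECLM M]
  exact (toECLM M).le_opNorm x

lemma inner_bound {m : ℕ} (v w : ℝ → EuclideanSpace ℝ (Fin m))
    (hv : ∀ t, HasDerivAt v (w t) t) (W : ℝ) (hW : ∀ t, ‖w t‖ ≤ W)
    (a s : ℝ) (hs0 : 0 ≤ s) :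
    ‖(∫ β in a..(a + s), v β) - s • v a‖ ≤ W * s ^ 2 / 2 := by
  have hvc : Continuous v := continuous_iff_continuousAt.2 fun t => (hv t).continuousAt
  have h1 : (∫ β in a..(a + s), v β) - s • v a = ∫ β in a..(a + s), (v β - v a) := by
    rw [intervalIntegral.integral_sub (hvc.intervalIntegrable _ _)
      intervalIntegrable_const, intervalIntegral.integral_const, add_sub_cancel_left]
  rw [h1]
  have hmvt : ∀ β ∈ Set.Icc a (a + s), ‖v β - v a‖ ≤ W * (β - a) :=
    norm_image_sub_le_of_norm_deriv_le_segment'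
      (fun x _ => (hv x).hasDerivWithinAt) (fun x _ => hW x)
  calc ‖∫ β in a..(a + s), (v β - v a)‖ ≤ ∫ β in a..(a + s), ‖v β - v a‖ :=
        intervalIntegral.norm_integral_le_integral_norm (by linarith)
    _ ≤ ∫ β in a..(a + s), W * (β - a) := by
        apply intervalIntegral.integral_mono_on (by linarith)
          (((hvc.sub continuous_const).norm).intervalIntegrable _ _)
          ((continuous_const.mul (continuous_id.sub continuous_const)).intervalIntegrable _ _)
        intro x hx; exact hmvt x hx
    _ = W * s ^ 2 / 2 := by
        rw [intervalIntegral.integral_const_mul]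
        have h2 : ∫ β in a..(a + s), (β - a) = s ^ 2 / 2 := by
          have := intervalIntegral.integral_sub (f := fun β : ℝ => β) (g := fun _ : ℝ => a)
            (μ := volume) (a := a) (b := a + s)
            (continuous_id.intervalIntegrable _ _) intervalIntegrable_const
          rw [this, integral_id, intervalIntegral.integral_const, smul_eq_mul]
          ring
        rw [h2]; ring

/-- If `f` is twice continuously differentiable with first derivative `v`
and `‖v′(t)‖ ≤ W` for all `t`, then
`d′[k] = (∫₀ᵀ e^{Aτ} B (T−τ) dτ) v(kT) + R[k]` where
`‖R[k]‖ ≤ (T² W / 2) ∫₀ᵀ ‖e^{Aτ} B‖ dτ`. -/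
theorem dPrime_expansion
    {n m : ℕ} (A : Matrix (Fin n) (Fin n) ℝ) (B : Matrix (Fin n) (Fin m) ℝ)
    (f v w : ℝ → EuclideanSpace ℝ (Fin m))
    (hf : ∀ t, HasDerivAt f (v t) t) (hv : ∀ t, HasDerivAt v (w t) t)
    (hw : Continuous w)
    (W : ℝ) (hW : ∀ t, ‖w t‖ ≤ W)
    (T : ℝ) (hT : 0 < T) (k : ℕ) :
    ‖dPrime A B v T k
        - Matrix.toEuclideanLin (∫ τ in (0:ℝ)..T, (T - τ) • (exp (τ • A) * B))
            (v ((k : ℝ) * T))‖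
      ≤ T ^ 2 * W / 2 * ∫ τ in (0:ℝ)..T, ‖exp (τ • A) * B‖ := by
  have hW0 : 0 ≤ W := le_trans (norm_nonneg _) (hW 0)
  have hvc : Continuous v := continuous_iff_continuousAt.2 fun t => (hv t).continuousAt
  set a : ℝ := (k : ℝ) * T with ha
  set Mf : ℝ → Matrix (Fin n) (Fin m) ℝ := fun τ => exp (τ • A) * B with hMf
  have hMc : Continuous Mf := by
    have h1 : Continuous fun τ : ℝ => τ • A := continuous_id.smul continuous_const
    have h2 : Continuous fun τ : ℝ => exp (τ • A) := 
      continuous_iff_continuousAt.2 fun t => (hasDerivAt_exp_smul_const (𝕂 := ℝ) A t).continuousAt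
    exact h2.matrix_mul continuous_const
  set I : ℝ → EuclideanSpace ℝ (Fin m) :=
    fun τ => ∫ β in a..(((k : ℝ) + 1) * T - τ), v β with hI
  have hIc : Continuous I := by
    have h1 : Continuous fun x : ℝ => ∫ β in a..x, v β :=
      intervalIntegral.continuous_primitive (fun c d => hvc.intervalIntegrable c d) a
    exact h1.comp (continuous_const.sub continuous_id)
  set r : ℝ → EuclideanSpace ℝ (Fin m) := fun τ => I τ - (T - τ) • v a with hr
  -- pointwise remainder bound
  have hrb : ∀ τ ∈ Set.Icc (0:ℝ) T, ‖r τ‖ ≤ T ^ 2 * W / 2 := by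
    intro τ hτ
    have hs0 : 0 ≤ T - τ := by linarith [hτ.2]
    have hub : ((k : ℝ) + 1) * T - τ = a + (T - τ) := by rw [ha]; ring
    have h1 : r τ = (∫ β in a..(a + (T - τ)), v β) - (T - τ) • v a := by
      rw [hr, hI]; simp only [hub]
    rw [h1]
    calc ‖(∫ β in a..(a + (T - τ)), v β) - (T - τ) • v a‖ ≤ W * (T - τ) ^ 2 / 2 :=
          inner_bound v w hv W hW a (T - τ) hs0
      _ ≤ W * T ^ 2 / 2 := by
          have : (T - τ) ^ 2 ≤ T ^ 2 := by nlinarith [hτ.1, hτ.2]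
          nlinarith
      _ = T ^ 2 * W / 2 := by ring
  -- rewrite the difference as a single integral
  have hg_cont : Continuous fun τ => Matrix.toEuclideanLin (Mf τ) (I τ) := by
    have := (toECLM.continuous.comp hMc).clm_apply hIc
    simp only [Function.comp_apply, toECLM_apply] at this; exact this
  have hh_cont : Continuous fun τ => (T - τ) • Matrix.toEuclideanLin (Mf τ) (v a) := by
    have h2 : Continuous fun τ => Matrix.toEuclideanLin (Mf τ) (v a) := by
      have := (toECLM.continuous.comp hMc).clm_apply (continuous_const :
        Continuous fun _ : ℝ => v a)
      simp only [Function.comp_apply, toECLM_apply] at this; exact this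
    exact (continuous_const.sub continuous_id).smul h2
  have hint : IntervalIntegrable (fun τ => (T - τ) • Mf τ) volume 0 T :=
    ((continuous_const.sub continuous_id).smul hMc).intervalIntegrable _ _
  have hcomm : Matrix.toEuclideanLin (∫ τ in (0:ℝ)..T, (T - τ) • Mf τ) (v a)
      = ∫ τ in (0:ℝ)..T, (T - τ) • Matrix.toEuclideanLin (Mf τ) (v a) := by
    have h3 := (ContinuousLinearMap.flip (toECLM (n := n) (m := m)) (v a)).intervalIntegral_comp_comm hint
    rw [ContinuousLinearMap.flip_apply, toECLM_apply] at h3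
    rw [← h3]
    refine intervalIntegral.integral_congr fun τ _ => ?_
    rw [ContinuousLinearMap.flip_apply, toECLM_apply, _root_.map_smul, LinearMap.smul_apply]
  have hdiff : dPrime A B v T k
      - Matrix.toEuclideanLin (∫ τ in (0:ℝ)..T, (T - τ) • Mf τ) (v a)
      = ∫ τ in (0:ℝ)..T, Matrix.toEuclideanLin (Mf τ) (r τ) := by
    rw [hcomm, dPrime]
    rw [← intervalIntegral.integral_sub (hg_cont.intervalIntegrable _ _)
      (hh_cont.intervalIntegrable _ _)]
    exact intervalIntegral.integral_congr fun τ _ => by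
      simp [r, map_sub, _root_.map_smul]
  have hrc : Continuous r := hIc.sub ((continuous_const.sub continuous_id).smul continuous_const)
  have hG_cont : Continuous fun τ => Matrix.toEuclideanLin (Mf τ) (r τ) := by
    have := (toECLM.continuous.comp hMc).clm_apply hrc
    simp only [Function.comp_apply, toECLM_apply] at this; exact this
  rw [hdiff]
  calc ‖∫ τ in (0:ℝ)..T, Matrix.toEuclideanLin (Mf τ) (r τ)‖
      ≤ ∫ τ in (0:ℝ)..T, ‖Matrix.toEuclideanLin (Mf τ) (r τ)‖ :=
        intervalIntegral.norm_integral_le_integral_norm hT.le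
    _ ≤ ∫ τ in (0:ℝ)..T, T ^ 2 * W / 2 * ‖Mf τ‖ := by
        apply intervalIntegral.integral_mono_on hT.le
          (hG_cont.norm.intervalIntegrable _ _)
          ((continuous_const.mul hMc.norm).intervalIntegrable _ _)
        intro x hx
        calc ‖Matrix.toEuclideanLin (Mf x) (r x)‖ ≤ ‖Mf x‖ * ‖r x‖ :=
              norm_toEuclideanLin_apply_le _ _
          _ ≤ ‖Mf x‖ * (T ^ 2 * W / 2) :=
              mul_le_mul_of_nonneg_left (hrb x hx) (norm_nonneg _)
          _ = T ^ 2 * W / 2 * ‖Mf x‖ := mul_comm _ _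
    _ = T ^ 2 * W / 2 * ∫ τ in (0:ℝ)..T, ‖Mf τ‖ :=
        intervalIntegral.integral_const_mul _ _
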